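/- arXiv:2605.12921 — 3 statements merged into one kernel-verified Lean document; each statement's English description precedes it below -/
import Mathlib

section
/- Let G be the group with presentation ⟨a₁, a₂ | a₁³a₂⁴, (a₁⁻¹a₂⁻¹)², ((a₂a₁)¹²a₁⁻³)²⟩, and set μ = a₁⁻¹a₂⁻¹ and λ = (a₂a₁)¹²a₁⁻³ in G. Then μ has order 2, λ has order 2, and μλ has order 2 in G; in particular the natural map C₂ × C₂ → G sending the generators to μ and λ is injective. -/
/-- Relators for the group ⟨a₁, a₂ | a₁³a₂⁴, (a₁⁻¹a₂⁻¹)², ((a₂a₁)¹²a₁⁻³)²⟩. -/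
def t34Rels : Set (FreeGroup (Fin 2)) :=
  {(FreeGroup.of 0) ^ 3 * (FreeGroup.of 1) ^ 4,
   ((FreeGroup.of 0)⁻¹ * (FreeGroup.of 1)⁻¹) ^ 2,
   ((FreeGroup.of 1 * FreeGroup.of 0) ^ 12 * ((FreeGroup.of 0)⁻¹) ^ 3) ^ 2}

/-!
Since `μ⁻¹ = a₂a₁` and `μ² = 1`, the factor `(a₂a₁)¹²` of `λ` is trivial, so `λ = a₁⁻³ = a₂⁴` is
central. Hence `μ` and `λ` are commuting elements of square one, and they span a Klein four-group
as soon as `μ`, `λ` and `μλ` are nontrivial. This is checked in a permutation representation of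
`G` on eight points; its image, of order 48, is a central extension by `⟨a₁³⟩` of the triangle
group `⟨x, y | x³, y⁴, (yx)²⟩ ≅ S₄`.
-/

section KleinFour

variable {G : Type*} [Group G] {x y : G} {m n : ℕ}

theorem pow_val_add [NeZero n] (hx : x ^ n = 1) (a b : ZMod n) :
    x ^ (a + b).val = x ^ a.val * x ^ b.val := by
  rw [ZMod.val_add, ← pow_eq_pow_mod _ hx, pow_add]

theorem Commute.injective_pow_val_mul_pow_val [NeZero m] [NeZero n] (hxy : Commute x y)
    (hx : x ^ m = 1) (hy : y ^ n = 1)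
    (hker : ∀ p : ZMod m × ZMod n, x ^ p.1.val * y ^ p.2.val = 1 → p = 0) :
    Function.Injective fun p : ZMod m × ZMod n => x ^ p.1.val * y ^ p.2.val := by
  intro p q (hpq : x ^ p.1.val * y ^ p.2.val = x ^ q.1.val * y ^ q.2.val)
  have hsplit : x ^ p.1.val * y ^ p.2.val =
      x ^ q.1.val * y ^ q.2.val * (x ^ (p - q).1.val * y ^ (p - q).2.val) := by
    conv_lhs => rw [← add_sub_cancel q p]
    rw [Prod.fst_add, Prod.snd_add, pow_val_add hx, pow_val_add hy,
      (hxy.pow_pow _ _).symm.mul_mul_mul_comm]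
  rw [hsplit, mul_eq_left] at hpq
  exact sub_eq_zero.mp (hker _ hpq)

theorem Commute.injective_pow_val_mul_pow_val_of_orderOf_eq_two (hxy : Commute x y)
    (hx : orderOf x = 2) (hy : orderOf y = 2) (hxy₁ : orderOf (x * y) = 2) :
    Function.Injective fun p : ZMod 2 × ZMod 2 => x ^ p.1.val * y ^ p.2.val := by
  refine hxy.injective_pow_val_mul_pow_val (hx ▸ pow_orderOf_eq_one x)
    (hy ▸ pow_orderOf_eq_one y) ?_
  have hne : ∀ z : G, orderOf z = 2 → z ≠ 1 := fun z hz h => by simp [h] at hz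
  rintro ⟨a, b⟩ h
  fin_cases a <;> fin_cases b
  · rfl
  · exact absurd (by simpa [ZMod.val] using h) (hne y hy)
  · exact absurd (by simpa [ZMod.val] using h) (hne x hx)
  · exact absurd (by simpa [ZMod.val] using h) (hne _ hxy₁)

end KleinFour

theorem commute_pow_of_pow_mul_pow_eq_one {G : Type*} [Group G] {a b : G} {p q : ℕ}
    (h : a ^ p * b ^ q = 1) : Commute (a ^ p) b := by
  rw [eq_inv_of_mul_eq_one_left h]
  exact ((Commute.refl b).pow_left q).inv_left

namespace T34

open PresentedGroup

abbrev a₁ : PresentedGroup t34Rels := of 0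
abbrev a₂ : PresentedGroup t34Rels := of 1

abbrev meridian : PresentedGroup t34Rels := a₁⁻¹ * a₂⁻¹

abbrev longitude : PresentedGroup t34Rels := (a₂ * a₁) ^ 12 * a₁⁻¹ ^ 3

theorem pow_three_mul_pow_four : a₁ ^ 3 * a₂ ^ 4 = 1 :=
  one_of_mem (Set.mem_insert _ _)

theorem meridian_sq : meridian ^ 2 = 1 :=
  one_of_mem (by simp [t34Rels])

theorem longitude_sq : longitude ^ 2 = 1 :=
  one_of_mem (by simp [t34Rels])

theorem longitude_eq : longitude = (a₁ ^ 3)⁻¹ := by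
  have h : (a₂ * a₁) ^ 2 = 1 := by
    rw [← inv_inj, ← inv_pow, mul_inv_rev, meridian_sq, inv_one]
  rw [longitude, show 12 = 2 * 6 from rfl, pow_mul, h, one_pow, one_mul, inv_pow]

theorem commute_meridian_longitude : Commute meridian longitude := by
  rw [longitude_eq]
  have ha : Commute (a₁ ^ 3) a₁ := Commute.pow_self a₁ 3
  have hb : Commute (a₁ ^ 3) a₂ := commute_pow_of_pow_mul_pow_eq_one pow_three_mul_pow_four
  exact (ha.inv_right.mul_right hb.inv_right).inv_left.symm

def permA₁ : Equiv.Perm (Fin 8) :=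
  ⟨![1, 0, 3, 4, 5, 6, 7, 2], ![1, 0, 7, 2, 3, 4, 5, 6], by decide, by decide⟩

def permA₂ : Equiv.Perm (Fin 8) :=
  ⟨![5, 2, 4, 0, 3, 7, 1, 6], ![3, 6, 1, 4, 2, 0, 7, 5], by decide, by decide⟩

set_option maxRecDepth 10000 in
def toPerm : PresentedGroup t34Rels →* Equiv.Perm (Fin 8) :=
  toGroup (f := (![permA₁, permA₂] : Fin 2 → Equiv.Perm (Fin 8))) <| by
    simp only [t34Rels, Set.mem_insert_iff, Set.mem_singleton_iff]
    rintro r (rfl | rfl | rfl) <;>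
      simp only [map_mul, map_pow, map_inv, FreeGroup.lift_apply_of] <;> decide

theorem toPerm_a₁ : toPerm a₁ = permA₁ := toGroup.of _

theorem toPerm_a₂ : toPerm a₂ = permA₂ := toGroup.of _

theorem meridian_ne_one : meridian ≠ 1 :=
  ne_one_of_map (f := toPerm) (by simp only [map_mul, map_inv, toPerm_a₁, toPerm_a₂]; decide)

theorem longitude_ne_one : longitude ≠ 1 :=
  ne_one_of_map (f := toPerm) <| by
    simp only [map_mul, map_pow, map_inv, toPerm_a₁, toPerm_a₂]; decide

theorem meridian_mul_longitude_ne_one : meridian * longitude ≠ 1 :=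
  ne_one_of_map (f := toPerm) <| by
    simp only [map_mul, map_pow, map_inv, toPerm_a₁, toPerm_a₂]; decide

theorem orderOf_meridian : orderOf meridian = 2 :=
  orderOf_eq_prime meridian_sq meridian_ne_one

theorem orderOf_longitude : orderOf longitude = 2 :=
  orderOf_eq_prime longitude_sq longitude_ne_one

theorem orderOf_meridian_mul_longitude : orderOf (meridian * longitude) = 2 :=
  orderOf_eq_prime (by rw [commute_meridian_longitude.mul_pow, meridian_sq, longitude_sq, one_mul])
    meridian_mul_longitude_ne_one

end T34

/-- In G = ⟨a₁, a₂ | a₁³a₂⁴, (a₁⁻¹a₂⁻¹)², ((a₂a₁)¹²a₁⁻³)²⟩, the meridian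
μ = a₁⁻¹a₂⁻¹, the longitude λ = (a₂a₁)¹²a₁⁻³ and their product all have order 2;
in particular the natural map C₂ × C₂ → G, (m,n) ↦ μᵐλⁿ, is injective. -/
theorem t34_C2xC2_injective :
    let μ : PresentedGroup t34Rels := (PresentedGroup.of 0)⁻¹ * (PresentedGroup.of 1)⁻¹
    let lam : PresentedGroup t34Rels :=
      (PresentedGroup.of 1 * PresentedGroup.of 0) ^ 12 * ((PresentedGroup.of 0)⁻¹) ^ 3
    orderOf μ = 2 ∧ orderOf lam = 2 ∧ orderOf (μ * lam) = 2 ∧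
      Function.Injective (fun p : ZMod 2 × ZMod 2 => μ ^ p.1.val * lam ^ p.2.val) := by
  open T34 in
  exact ⟨orderOf_meridian, orderOf_longitude, orderOf_meridian_mul_longitude,
    commute_meridian_longitude.injective_pow_val_mul_pow_val_of_orderOf_eq_two orderOf_meridian
      orderOf_longitude orderOf_meridian_mul_longitude⟩
end

section
/- Let H, G₁, G₂ be groups, Hᵢ ≤ Gᵢ subgroups, and fᵢ : H → Hᵢ injective homomorphisms for i = 1, 2. Then the induced map H₁ ∗_H H₂ → G₁ ∗_H G₂ between amalgamated free products is injective. -/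
/-!
Use normal forms. A right transversal of `f i (H)` in `Hᵢ` consists of elements lying in
distinct right cosets of `f i (H)` in `Gᵢ`, so it extends to a right transversal of `f i (H)`
in `Gᵢ`. With these choices every normal word of `H₁ ∗_H H₂` is also a normal word of
`G₁ ∗_H G₂`, with the same value under the induced map; since evaluation of normal words is a
bijection, the induced map is injective.
-/

universe u

open Function

namespace Subgroup

variable {Γ : Type*} [Group Γ]

theorem IsComplement.injOn_quotientMk_rightRel {K : Subgroup Γ} {T : Set Γ}
    (h : IsComplement K T) :
    T.InjOn (Quotient.mk'' : Γ → Quotient (QuotientGroup.rightRel K)) :=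
  Set.injOn_iff_injective.2 (isComplement_subgroup_left_iff_bijective.1 h).1

theorem exists_isComplement_right_superset (K : Subgroup Γ) {S : Set Γ}
    (hS : S.InjOn (Quotient.mk'' : Γ → Quotient (QuotientGroup.rightRel K))) :
    ∃ T, IsComplement K T ∧ S ⊆ T := by
  classical
  let rep : Quotient (QuotientGroup.rightRel K) → Γ := fun q =>
    if h : ∃ a ∈ S, Quotient.mk'' a = q then h.choose else q.out
  have mk_rep : ∀ q, Quotient.mk'' (rep q) = q := by
    intro q
    by_cases h : ∃ a ∈ S, Quotient.mk'' a = q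
    · simp only [rep, dif_pos h, h.choose_spec.2]
    · simp only [rep, dif_neg h, Quotient.out_eq']
  refine ⟨Set.range rep, isComplement_range_right mk_rep, fun a ha => ⟨Quotient.mk'' a, ?_⟩⟩
  have h : ∃ b ∈ S, (Quotient.mk'' b : Quotient (QuotientGroup.rightRel K)) = Quotient.mk'' a :=
    ⟨a, ha, rfl⟩
  simp only [rep, dif_pos h]
  exact hS h.choose_spec.1 ha h.choose_spec.2

theorem _root_.Set.InjOn.quotientMk_rightRel_image {Δ : Type*} [Group Δ] {ψ : Γ →* Δ}
    (hψ : Injective ψ) {K : Subgroup Γ} {T : Set Γ}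
    (hT : T.InjOn (Quotient.mk'' : Γ → Quotient (QuotientGroup.rightRel K))) :
    (ψ '' T).InjOn (Quotient.mk'' : Δ → Quotient (QuotientGroup.rightRel (K.map ψ))) := by
  rintro _ ⟨x, hx, rfl⟩ _ ⟨y, hy, rfl⟩ hxy
  rw [Quotient.eq'', QuotientGroup.rightRel_apply, ← map_inv, ← map_mul,
    mem_map_iff_mem hψ] at hxy
  exact congrArg ψ (hT hx hy (Quotient.eq''.2 (QuotientGroup.rightRel_apply.2 hxy)))

end Subgroup

namespace Monoid.PushoutI

variable {ι H : Type*} {K G : ι → Type*} [Group H] [∀ i, Group (K i)] [∀ i, Group (G i)]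
  {φ : ∀ i, H →* K i}

noncomputable def map (ψ : ∀ i, K i →* G i) :
    PushoutI φ →* PushoutI (fun i => (ψ i).comp (φ i)) :=
  lift (fun i => (of i).comp (ψ i)) (base _)
    (fun i => by rw [MonoidHom.comp_assoc]; exact of_comp_eq_base i)

variable {ψ : ∀ i, K i →* G i}

@[simp]
theorem map_of {i : ι} (x : K i) : map ψ (of (φ := φ) i x) = of i (ψ i x) := by
  simp [map]

@[simp]
theorem map_base (h : H) : map ψ (base φ h) = base _ h := by
  simp [map]

namespace NormalWord

theorem exists_transversal_image_subset (hψ : ∀ i, Injective (ψ i)) (d : Transversal φ) :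
    ∃ d' : Transversal (fun i => (ψ i).comp (φ i)), ∀ i, ψ i '' d.set i ⊆ d'.set i := by
  have extend : ∀ i, ∃ T,
      Subgroup.IsComplement ((ψ i).comp (φ i)).range T ∧ ψ i '' d.set i ⊆ T := by
    intro i
    rw [MonoidHom.range_comp]
    exact Subgroup.exists_isComplement_right_superset _
      ((d.compl i).injOn_quotientMk_rightRel.quotientMk_rightRel_image (hψ i))
  choose T hT hdT using extend
  exact ⟨{ injective := fun i => (hψ i).comp (d.injective i)
           set := T
           one_mem := fun i => hdT i ⟨1, d.one_mem i, map_one _⟩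
           compl := hT }, hdT⟩

variable {d : Transversal φ} {d' : Transversal (fun i => (ψ i).comp (φ i))}

def map (hψ : ∀ i, Injective (ψ i)) (hd : ∀ i, ψ i '' d.set i ⊆ d'.set i)
    (w : NormalWord d) : NormalWord d' where
  toList := w.toList.map (Sigma.map id fun i => ψ i)
  ne_one := by
    simp only [List.mem_map]
    rintro _ ⟨⟨i, x⟩, hx, rfl⟩
    exact (map_ne_one_iff _ (hψ i)).2 (w.ne_one _ hx)
  chain_ne := by
    rw [List.isChain_map]
    exact w.chain_ne
  head := w.head
  normalized := by
    simp only [List.mem_map]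
    rintro i g ⟨⟨j, x⟩, hx, hxg⟩
    obtain ⟨rfl, hxg⟩ := Sigma.mk.inj_iff.1 hxg
    obtain rfl := eq_of_heq hxg
    exact hd j ⟨x, w.normalized j x hx, rfl⟩

theorem map_injective (hψ : ∀ i, Injective (ψ i)) (hd : ∀ i, ψ i '' d.set i ⊆ d'.set i) :
    Injective (map hψ hd) := fun _ _ h =>
  NormalWord.ext (congrArg (·.head) h)
    (List.map_injective_iff.2 (injective_id.sigma_map hψ) (congrArg (·.toList) h))

theorem prod_map (hψ : ∀ i, Injective (ψ i)) (hd : ∀ i, ψ i '' d.set i ⊆ d'.set i)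
    (w : NormalWord d) : (map hψ hd w).prod = PushoutI.map ψ w.prod := by
  simp only [prod, map, CoprodI.Word.prod, map_mul, map_base, MonoidHom.map_list_prod,
    List.map_map]
  refine congrArg _ (congrArg List.prod (List.map_congr_left fun ⟨i, x⟩ _ => ?_))
  change ofCoprodI (CoprodI.of (ψ i x)) = PushoutI.map ψ (ofCoprodI (φ := φ) (CoprodI.of x))
  rw [ofCoprodI_of, ofCoprodI_of, map_of]

end NormalWord

theorem map_injective (hφ : ∀ i, Injective (φ i)) (hψ : ∀ i, Injective (ψ i)) :
    Injective (map (φ := φ) ψ) := by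
  obtain ⟨d⟩ := NormalWord.transversal_nonempty φ hφ
  obtain ⟨d', hd⟩ := NormalWord.exists_transversal_image_subset hψ d
  classical
  have prod_surjective : Surjective (NormalWord.prod : NormalWord d → PushoutI φ) :=
    fun x => ⟨x • .empty, by simp⟩
  have map_comp_prod : map ψ ∘ NormalWord.prod = NormalWord.prod ∘ NormalWord.map hψ hd :=
    funext fun w => (NormalWord.prod_map hψ hd w).symm
  refine Injective.of_comp_right ?_ prod_surjective
  rw [map_comp_prod]
  exact NormalWord.prod_injective.comp (NormalWord.map_injective hψ hd)

end Monoid.PushoutI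

open Monoid

/-- If `H₁ ≤ G₁`, `H₂ ≤ G₂` are subgroups and `fᵢ : H → Hᵢ` are injective homomorphisms,
then the induced map `H₁ ∗_H H₂ → G₁ ∗_H G₂` of amalgamated free products is injective. -/
theorem pushout_subgroups_injective {H : Type u} {G : Bool → Type u}
    [Group H] [∀ b, Group (G b)]
    (H' : ∀ b, Subgroup (G b)) (f : ∀ b, H →* (H' b))
    (hf : ∀ b, Function.Injective (f b)) :
    ∃ F : Monoid.PushoutI f →* Monoid.PushoutI (fun b => ((H' b).subtype).comp (f b)),
      (∀ (b : Bool) (x : H' b),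
        F (Monoid.PushoutI.of (φ := f) b x) =
          Monoid.PushoutI.of (φ := fun b => ((H' b).subtype).comp (f b)) b (x : G b)) ∧
      Function.Injective F :=
  ⟨PushoutI.map fun b => (H' b).subtype, fun _ x => PushoutI.map_of (K := fun b => H' b) x,
    PushoutI.map_injective hf fun b => (H' b).subtype_injective⟩
end

section
/- Let G = ⟨v₁, v₂, w₁, w₂ | w₁v₁w₁⁻¹v₁, w₂v₂w₂⁻¹v₂, v₁v₂⁻¹, w₁²v₁^{k₁}(w₂²v₂^{k₂})⁻¹⟩ for fixed integers k₁, k₂. Then the quotient G/⟨⟨v₂², w₂²⟩⟩ is isomorphic to ⟨v₂, w₁, w₂ | [w₁, v₂], [w₂, v₂], w₁²v₂^{k₁+k₂}, w₂², v₂²⟩. -/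
/-!
Modulo v₂² and w₂², the Klein-bottle relation w v w⁻¹ v = 1 says exactly that w commutes with v,
the relation v₁ = v₂ eliminates v₁, and since v₂^{k₂} = v₂^{-k₂} the relation
w₁² v₁^{k₁} = w₂² v₂^{k₂} becomes w₁² v₂^{k₁+k₂} = 1. So both groups are quotients of the free
group on v₂, w₁, w₂ by the same normal subgroup; the isomorphism is the Tietze transformation
realised by the two homomorphisms prescribed on generators.
-/

/-- Relators for G = ⟨v₁, v₂, w₁, w₂ | w₁v₁w₁⁻¹v₁, w₂v₂w₂⁻¹v₂, v₁v₂⁻¹,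
w₁²v₁^{k₁}(w₂²v₂^{k₂})⁻¹⟩, with generators 0 ↦ v₁, 1 ↦ v₂, 2 ↦ w₁, 3 ↦ w₂. -/
def fourGenRels (k₁ k₂ : ℤ) : Set (FreeGroup (Fin 4)) :=
  {FreeGroup.of 2 * FreeGroup.of 0 * (FreeGroup.of 2)⁻¹ * FreeGroup.of 0,
   FreeGroup.of 3 * FreeGroup.of 1 * (FreeGroup.of 3)⁻¹ * FreeGroup.of 1,
   FreeGroup.of 0 * (FreeGroup.of 1)⁻¹,
   (FreeGroup.of 2) ^ 2 * (FreeGroup.of 0) ^ k₁ *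
     ((FreeGroup.of 3) ^ 2 * (FreeGroup.of 1) ^ k₂)⁻¹}

open scoped commutatorElement

/-- Relators for ⟨v₂, w₁, w₂ | [w₁,v₂], [w₂,v₂], w₁²v₂^{k₁+k₂}, w₂², v₂²⟩,
with generators 0 ↦ v₂, 1 ↦ w₁, 2 ↦ w₂. -/
def threeGenRels (k₁ k₂ : ℤ) : Set (FreeGroup (Fin 3)) :=
  {⁅FreeGroup.of (1 : Fin 3), FreeGroup.of 0⁆,
   ⁅FreeGroup.of (2 : Fin 3), FreeGroup.of 0⁆,
   (FreeGroup.of 1) ^ 2 * (FreeGroup.of 0) ^ (k₁ + k₂),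
   (FreeGroup.of 2) ^ 2,
   (FreeGroup.of 0) ^ 2}

theorem PresentedGroup.lift_comp_of_eq_one {α K : Type*} [Group K] {rels : Set (FreeGroup α)}
    (φ : PresentedGroup rels →* K) {r : FreeGroup α} (hr : r ∈ rels) :
    FreeGroup.lift (fun i => φ (PresentedGroup.of i)) r = 1 := by
  have hlift : FreeGroup.lift (fun i => φ (PresentedGroup.of i)) =
      φ.comp (PresentedGroup.mk rels) :=
    FreeGroup.ext_hom _ _ fun _ => by simp [PresentedGroup.of]
  simp [hlift, PresentedGroup.one_of_mem hr]

section
variable {K : Type*} [Group K]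

theorem mul_mul_inv_mul_eq_one_iff_commute {a b : K} (ha : a ^ 2 = 1) :
    b * a * b⁻¹ * a = 1 ↔ Commute b a := by
  have ha' : a⁻¹ = a := inv_eq_of_mul_eq_one_left (by rwa [← sq])
  rw [mul_eq_one_iff_eq_inv, ha', mul_inv_eq_iff_eq_mul, Commute, SemiconjBy]

theorem zpow_neg_of_sq_eq_one {a : K} (ha : a ^ 2 = 1) (n : ℤ) : a ^ (-n) = a ^ n := by
  rw [zpow_neg, ← inv_zpow, inv_eq_of_mul_eq_one_left (by rwa [← sq])]

theorem forall_fourGenRels_lift_eq_one_iff (k₁ k₂ : ℤ) (f : Fin 4 → K) :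
    (∀ r ∈ fourGenRels k₁ k₂, FreeGroup.lift f r = 1) ↔
      f 2 * f 0 * (f 2)⁻¹ * f 0 = 1 ∧ f 3 * f 1 * (f 3)⁻¹ * f 1 = 1 ∧ f 0 = f 1 ∧
        f 2 ^ 2 * f 0 ^ k₁ = f 3 ^ 2 * f 1 ^ k₂ := by
  simp only [fourGenRels, Set.forall_mem_insert, Set.mem_singleton_iff, forall_eq, map_mul,
    map_inv, map_pow, map_zpow, FreeGroup.lift_apply_of, mul_inv_eq_one]

theorem forall_threeGenRels_lift_eq_one_iff (k₁ k₂ : ℤ) (f : Fin 3 → K) :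
    (∀ r ∈ threeGenRels k₁ k₂, FreeGroup.lift f r = 1) ↔
      Commute (f 1) (f 0) ∧ Commute (f 2) (f 0) ∧ f 1 ^ 2 * f 0 ^ (k₁ + k₂) = 1 ∧
        f 2 ^ 2 = 1 ∧ f 0 ^ 2 = 1 := by
  simp [threeGenRels, commutatorElement_eq_one_iff_commute]

theorem fourGen_relations_iff_threeGen_relations (k₁ k₂ : ℤ) {v w₁ w₂ : K} (hv : v ^ 2 = 1)
    (hw : w₂ ^ 2 = 1) :
    (w₁ * v * w₁⁻¹ * v = 1 ∧ w₂ * v * w₂⁻¹ * v = 1 ∧ w₁ ^ 2 * v ^ k₁ = w₂ ^ 2 * v ^ k₂) ↔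
      Commute w₁ v ∧ Commute w₂ v ∧ w₁ ^ 2 * v ^ (k₁ + k₂) = 1 := by
  rw [mul_mul_inv_mul_eq_one_iff_commute hv, mul_mul_inv_mul_eq_one_iff_commute hv, hw, one_mul,
    ← zpow_neg_of_sq_eq_one hv k₂, zpow_add, ← mul_assoc, ← mul_inv_eq_one, zpow_neg, inv_inv]

end

section
variable (k₁ k₂ : ℤ)

local notation "G₄" => PresentedGroup (fourGenRels k₁ k₂)
local notation "G₃" => PresentedGroup (threeGenRels k₁ k₂)

abbrev squaresSubgroup : Subgroup G₄ :=
  Subgroup.normalClosure {PresentedGroup.of 1 ^ 2, PresentedGroup.of 3 ^ 2}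

local notation "Q" => G₄ ⧸ squaresSubgroup k₁ k₂

abbrev quotientGen (i : Fin 4) : Q :=
  QuotientGroup.mk (PresentedGroup.of i)

theorem threeGen_relations :
    Commute (.of 1 : G₃) (.of 0) ∧ Commute (.of 2 : G₃) (.of 0) ∧
      (.of 1 : G₃) ^ 2 * .of 0 ^ (k₁ + k₂) = 1 ∧ (.of 2 : G₃) ^ 2 = 1 ∧ (.of 0 : G₃) ^ 2 = 1 :=
  (forall_threeGenRels_lift_eq_one_iff k₁ k₂ _).1 fun _ =>
    PresentedGroup.lift_comp_of_eq_one (MonoidHom.id _)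

theorem quotientGen_relations :
    quotientGen k₁ k₂ 0 = quotientGen k₁ k₂ 1 ∧
      ∀ r ∈ threeGenRels k₁ k₂, FreeGroup.lift (quotientGen k₁ k₂ ∘ Fin.succ) r = 1 := by
  set ι := quotientGen k₁ k₂
  have hv : ι 1 ^ 2 = 1 := (QuotientGroup.eq_one_iff _).2 <|
    Subgroup.subset_normalClosure (Set.mem_insert _ _)
  have hw : ι 3 ^ 2 = 1 := (QuotientGroup.eq_one_iff _).2 <|
    Subgroup.subset_normalClosure (Set.mem_insert_of_mem _ rfl)
  obtain ⟨h₁, h₂, h₀₁, h₄⟩ := (forall_fourGenRels_lift_eq_one_iff k₁ k₂ ι).1 fun _ =>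
    PresentedGroup.lift_comp_of_eq_one (QuotientGroup.mk' _)
  rw [h₀₁] at h₁ h₄
  obtain ⟨hw₁, hw₂, hrel⟩ :=
    (fourGen_relations_iff_threeGen_relations k₁ k₂ hv hw).1 ⟨h₁, h₂, h₄⟩
  exact ⟨h₀₁, (forall_threeGenRels_lift_eq_one_iff k₁ k₂ _).2 ⟨hw₁, hw₂, hrel, hw, hv⟩⟩

theorem forall_fourGenRels_lift_threeGen_eq_one :
    ∀ r ∈ fourGenRels k₁ k₂, FreeGroup.lift (![.of 0, .of 0, .of 1, .of 2] : Fin 4 → G₃) r = 1 := by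
  obtain ⟨hb, hc, hbv, hc2, hv2⟩ := threeGen_relations k₁ k₂
  obtain ⟨h₁, h₂, h₄⟩ :=
    (fourGen_relations_iff_threeGen_relations k₁ k₂ hv2 hc2).2 ⟨hb, hc, hbv⟩
  exact (forall_fourGenRels_lift_eq_one_iff k₁ k₂ _).2 ⟨h₁, h₂, rfl, h₄⟩

def fourGenToThreeGen : G₄ →* G₃ :=
  PresentedGroup.toGroup (forall_fourGenRels_lift_threeGen_eq_one k₁ k₂)

theorem squaresSubgroup_le_ker : squaresSubgroup k₁ k₂ ≤ (fourGenToThreeGen k₁ k₂).ker := by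
  obtain ⟨-, -, -, hc2, hv2⟩ := threeGen_relations k₁ k₂
  refine Subgroup.normalClosure_le_normal ?_
  rintro _ (rfl | rfl) <;> simp [fourGenToThreeGen, PresentedGroup.toGroup.of, hv2, hc2]

def quotientToThreeGen : Q →* G₃ :=
  QuotientGroup.lift _ (fourGenToThreeGen k₁ k₂) (squaresSubgroup_le_ker k₁ k₂)

def threeGenToQuotient : G₃ →* Q :=
  PresentedGroup.toGroup (quotientGen_relations k₁ k₂).2

theorem quotientToThreeGen_quotientGen (i : Fin 4) :
    quotientToThreeGen k₁ k₂ (quotientGen k₁ k₂ i) = ![.of 0, .of 0, .of 1, .of 2] i :=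
  PresentedGroup.toGroup.of (forall_fourGenRels_lift_threeGen_eq_one k₁ k₂)

theorem threeGenToQuotient_of (i : Fin 3) :
    threeGenToQuotient k₁ k₂ (.of i) = quotientGen k₁ k₂ i.succ :=
  PresentedGroup.toGroup.of (quotientGen_relations k₁ k₂).2

theorem threeGenToQuotient_comp_quotientToThreeGen :
    (threeGenToQuotient k₁ k₂).comp (quotientToThreeGen k₁ k₂) = MonoidHom.id Q := by
  refine QuotientGroup.monoidHom_ext _ <| PresentedGroup.ext fun i => ?_
  change threeGenToQuotient k₁ k₂ (quotientToThreeGen k₁ k₂ (quotientGen k₁ k₂ i)) =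
    quotientGen k₁ k₂ i
  fin_cases i <;> simp [quotientToThreeGen_quotientGen, threeGenToQuotient_of,
    (quotientGen_relations k₁ k₂).1]

theorem quotientToThreeGen_comp_threeGenToQuotient :
    (quotientToThreeGen k₁ k₂).comp (threeGenToQuotient k₁ k₂) = MonoidHom.id G₃ :=
  PresentedGroup.ext fun i => by
    fin_cases i <;> simp [quotientToThreeGen_quotientGen, threeGenToQuotient_of]

end

/-- G/⟨⟨v₂², w₂²⟩⟩ is isomorphic to ⟨v₂, w₁, w₂ | [w₁,v₂], [w₂,v₂], w₁²v₂^{k₁+k₂}, w₂², v₂²⟩,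
matching generators v₂ ↦ v₂, w₁ ↦ w₁, w₂ ↦ w₂. -/
theorem klein_boundary_quotient (k₁ k₂ : ℤ) :
    ∃ e : (PresentedGroup (fourGenRels k₁ k₂) ⧸
        Subgroup.normalClosure
          {((PresentedGroup.of 1 : PresentedGroup (fourGenRels k₁ k₂)) ^ 2),
           ((PresentedGroup.of 3 : PresentedGroup (fourGenRels k₁ k₂)) ^ 2)}) ≃*
        PresentedGroup (threeGenRels k₁ k₂),
      e (QuotientGroup.mk (PresentedGroup.of 1)) = PresentedGroup.of 0 ∧
      e (QuotientGroup.mk (PresentedGroup.of 2)) = PresentedGroup.of 1 ∧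
      e (QuotientGroup.mk (PresentedGroup.of 3)) = PresentedGroup.of 2 :=
  ⟨MonoidHom.toMulEquiv _ _ (threeGenToQuotient_comp_quotientToThreeGen k₁ k₂)
      (quotientToThreeGen_comp_threeGenToQuotient k₁ k₂),
    quotientToThreeGen_quotientGen k₁ k₂ 1, quotientToThreeGen_quotientGen k₁ k₂ 2,
    quotientToThreeGen_quotientGen k₁ k₂ 3⟩
end
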